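/- arXiv:1810.02789 — 3 statements merged into one kernel-verified Lean document; each statement's English description precedes it below -/
import Mathlib

section
/- Monotonicity in K of the Jensen-type cross-entropy bound: for i.i.d. ζ^1,...,ζ^{K+1} ~ p_θ(ζ) and any fixed z with p_θ(z|ζ) > 0, E_{ζ^{1..K}}[log (1/K) Σ_{k=1}^K p_θ(z|ζ^k)] ≤ E_{ζ^{1..K+1}}[log (1/(K+1)) Σ_{k=1}^{K+1} p_θ(z|ζ^k)]. -/
/-!
Weighting by `∏ p(ζ_k)` turns both sides into expectations under the i.i.d. law `ν = p • μ`.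
For positive `x_0, …, x_K` the mean of all `K + 1` numbers is the average of the `K + 1`
leave-one-out means, so by concavity of `log` the log of the full mean dominates the average of
the logs of the leave-one-out means. Each leave-one-out mean has the law of the `K`-sample mean,
and taking expectations gives the claim. The base measure need not be σ-finite, but the
integrable density `p` vanishes off a set on which it is, and that suffices for Tonelli.
-/

open MeasureTheory Set Filter Real
open scoped ENNReal NNReal

theorem Set.indicator_univ_pi_prod {ι : Type*} [Fintype ι] {α : ι → Type*} {M : Type*}
    [CommMonoidWithZero M] (s : ∀ i, Set (α i)) (f : ∀ i, α i → M) :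
    (univ.pi s).indicator (fun x => ∏ i, f i (x i))
      = fun x => ∏ i, (s i).indicator (f i) (x i) := by
  ext x
  by_cases hx : x ∈ univ.pi s
  · rw [indicator_of_mem hx]
    exact Finset.prod_congr rfl fun i _ => (indicator_of_mem (hx i (mem_univ i)) _).symm
  · obtain ⟨i, -, hi⟩ := not_forall₂.1 hx
    rw [indicator_of_notMem hx]
    exact (Finset.prod_eq_zero (Finset.mem_univ i) (indicator_of_notMem hi _)).symm

theorem Fin.sum_sum_succAbove {n : ℕ} (x : Fin (n + 1) → ℝ) :
    ∑ j : Fin (n + 1), ∑ k : Fin n, x (j.succAbove k) = n * ∑ i, x i := by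
  have h : ∀ j, ∑ k : Fin n, x (j.succAbove k) = ∑ i, x i - x j := fun j => by
    rw [Fin.sum_univ_succAbove x j]; ring
  simp only [h, Finset.sum_sub_distrib, Finset.sum_const, Finset.card_univ, Fintype.card_fin,
    nsmul_eq_mul]
  push_cast
  ring

theorem Real.sum_log_mean_succAbove_le {n : ℕ} (hn : 0 < n) {x : Fin (n + 1) → ℝ}
    (hx : ∀ i, 0 < x i) :
    ∑ j : Fin (n + 1), (n + 1 : ℝ)⁻¹ * log ((∑ k : Fin n, x (j.succAbove k)) / n)
      ≤ log ((∑ i, x i) / (n + 1)) := by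
  have hmean : ∑ j : Fin (n + 1), (n + 1 : ℝ)⁻¹ • ((∑ k : Fin n, x (j.succAbove k)) / n)
      = (∑ i, x i) / (n + 1) := by
    rw [← Finset.smul_sum, ← Finset.sum_div, Fin.sum_sum_succAbove, smul_eq_mul]
    field_simp
  rw [← hmean]
  refine strictConcaveOn_log_Ioi.concaveOn.le_map_sum (fun _ _ => by positivity) ?_ fun j _ => ?_
  · simp only [Finset.sum_const, Finset.card_univ, Fintype.card_fin, nsmul_eq_mul]
    push_cast
    field_simp
  · have : Nonempty (Fin n) := ⟨⟨0, hn⟩⟩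
    exact div_pos (Finset.sum_pos (fun k _ => hx _) Finset.univ_nonempty) (by exact_mod_cast hn)

-- Mathlib's lemmas on `Measure.pi` assume σ-finite factors; these four hold without it.
namespace MeasureTheory.Measure

variable {ι : Type*} [Fintype ι] {α : ι → Type*} [∀ i, MeasurableSpace (α i)]

theorem pi_univ_pi_le (μ : ∀ i, Measure (α i)) {s : ∀ i, Set (α i)}
    (hs : ∀ i, MeasurableSet (s i)) : Measure.pi μ (univ.pi s) ≤ ∏ i, μ i (s i) := by
  rw [Measure.pi_def, toMeasure_apply _ _ (.univ_pi hs)]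
  exact OuterMeasure.pi_pi_le _ s

theorem tendsto_eval_ae_ae' (μ : ∀ i, Measure (α i)) (i : ι) :
    Tendsto (Function.eval i) (ae (Measure.pi μ)) (ae (μ i)) := by
  classical
  intro s hs
  rw [mem_ae_iff] at hs
  rw [mem_map, mem_ae_iff, ← preimage_compl]
  obtain ⟨u, hsu, hu, hμu⟩ := exists_measurable_superset_of_null hs
  refine measure_mono_null (preimage_mono hsu) (nonpos_iff_eq_zero.1 ?_)
  rw [← univ_pi_update_univ]
  refine (pi_univ_pi_le μ fun j => ?_).trans_eq
    (Finset.prod_eq_zero (Finset.mem_univ i) (by simpa))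
  rcases eq_or_ne j i with rfl | hj <;> simp [*]

theorem pi_mono {μ ν : ∀ i, Measure (α i)} (h : ∀ i, μ i ≤ ν i) :
    Measure.pi μ ≤ Measure.pi ν := by
  refine Measure.le_iff.2 fun s hs => ?_
  simp only [Measure.pi_def, toMeasure_apply _ _ hs]
  revert s hs
  suffices OuterMeasure.pi (fun i => (μ i).toOuterMeasure) ≤
      OuterMeasure.pi (fun i => (ν i).toOuterMeasure) from fun s _ => this s
  refine OuterMeasure.le_pi.2 fun s _ => (OuterMeasure.pi_pi_le _ s).trans ?_
  exact Finset.prod_le_prod' fun i _ => (Measure.le_iff'.1 (h i)) (s i)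

theorem restrict_univ_pi (μ : ∀ i, Measure (α i)) {t : ∀ i, Set (α i)}
    (ht : ∀ i, MeasurableSet (t i)) [∀ i, SigmaFinite ((μ i).restrict (t i))] :
    (Measure.pi μ).restrict (univ.pi t) = Measure.pi fun i => (μ i).restrict (t i) := by
  refine (pi_eq fun s hs => ?_).symm
  rw [restrict_apply (.univ_pi hs), ← pi_inter_distrib]
  refine le_antisymm ?_ ?_
  · exact (pi_univ_pi_le μ fun i => (hs i).inter (ht i)).trans_eq
      (Finset.prod_congr rfl fun i _ => (restrict_apply (hs i)).symm)
  · calc ∏ i, (μ i).restrict (t i) (s i)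
        = Measure.pi (fun i => (μ i).restrict (t i)) (univ.pi fun i => s i ∩ t i) := by
          rw [pi_pi]
          refine Finset.prod_congr rfl fun i _ => ?_
          rw [restrict_apply (hs i), restrict_apply ((hs i).inter (ht i)), inter_assoc,
            inter_self]
      _ ≤ Measure.pi μ (univ.pi fun i => s i ∩ t i) :=
          pi_mono (fun i => restrict_le_self) _

end MeasureTheory.Measure

namespace MeasureTheory

variable {α : Type*} [MeasurableSpace α]

theorem lintegral_fin_nat_prod_eq_prod {n : ℕ} {μ : Fin n → Measure α} [∀ i, SigmaFinite (μ i)]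
    {f : Fin n → α → ℝ≥0∞} (hf : ∀ i, Measurable (f i)) :
    ∫⁻ x, ∏ i, f i (x i) ∂Measure.pi μ = ∏ i, ∫⁻ a, f i a ∂μ i := by
  induction n with
  | zero => simp
  | succ n ih =>
      calc
        _ = ∫⁻ x : α × (Fin n → α), f 0 x.1 * ∏ i : Fin n, f i.succ (x.2 i)
            ∂((μ 0).prod (Measure.pi fun i => μ i.succ)) := by
          rw [← ((measurePreserving_piFinSuccAbove μ 0).symm).lintegral_comp_emb
            (MeasurableEquiv.measurableEmbedding _)]
          simp_rw [MeasurableEquiv.piFinSuccAbove_symm_apply, Fin.insertNthEquiv,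
            Fin.prod_univ_succ, Fin.insertNth_zero, Equiv.coe_fn_mk, Fin.cons_succ,
            Fin.cons_zero]
          rfl
        _ = (∫⁻ a, f 0 a ∂μ 0) * ∏ i : Fin n, ∫⁻ a, f i.succ a ∂μ i.succ := by
          rw [← ih fun i : Fin n => hf i.succ]
          exact lintegral_prod_mul (hf 0).aemeasurable
            (Finset.measurable_prod _ fun (i : Fin n) _ =>
              (hf i.succ).comp (measurable_pi_apply i)).aemeasurable
        _ = ∏ i, ∫⁻ a, f i a ∂μ i := (Fin.prod_univ_succ fun i => ∫⁻ a, f i a ∂μ i).symm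

theorem Measure.pi_withDensity {n : ℕ} {μ : Fin n → Measure α} [∀ i, SigmaFinite (μ i)]
    {w : Fin n → α → ℝ≥0∞} (hw : ∀ i, Measurable (w i))
    [∀ i, SigmaFinite ((μ i).withDensity (w i))] :
    Measure.pi (fun i => (μ i).withDensity (w i))
      = (Measure.pi μ).withDensity fun x => ∏ i, w i (x i) := by
  refine pi_eq fun s hs => ?_
  rw [withDensity_apply _ (.univ_pi hs), ← lintegral_indicator (.univ_pi hs),
    indicator_univ_pi_prod, lintegral_fin_nat_prod_eq_prod fun i => (hw i).indicator (hs i)]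
  refine Finset.prod_congr rfl fun i _ => ?_
  rw [lintegral_indicator (hs i), withDensity_apply _ (hs i)]

theorem Measure.pi_withDensity_of_restrict {n : ℕ} {μ : Fin n → Measure α}
    {t : Fin n → Set α} (ht : ∀ i, MeasurableSet (t i))
    [∀ i, SigmaFinite ((μ i).restrict (t i))] {w : Fin n → α → ℝ≥0}
    (hw : ∀ i, Measurable (w i)) (hwt : ∀ i, ∀ a ∉ t i, w i a = 0) :
    Measure.pi (fun i => (μ i).withDensity fun a => w i a)
      = (Measure.pi μ).withDensity fun x => ∏ i, (w i (x i) : ℝ≥0∞) := by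
  have hind : ∀ i, (t i).indicator (fun a => (w i a : ℝ≥0∞)) = fun a => (w i a : ℝ≥0∞) :=
    fun i => indicator_eq_self.2 fun a ha => by_contra fun hat => ha (by simp [hwt i a hat])
  have hfactor : ∀ i, (μ i).withDensity (fun a => w i a)
      = ((μ i).restrict (t i)).withDensity fun a => w i a := fun i => by
    rw [← withDensity_indicator (ht i), hind]
  simp_rw [hfactor]
  rw [pi_withDensity fun i => (hw i).coe_nnreal_ennreal, ← Measure.restrict_univ_pi μ ht,
    ← withDensity_indicator (.univ_pi ht), indicator_univ_pi_prod t fun i a => (w i a : ℝ≥0∞)]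
  simp_rw [hind]

theorem exists_isProbabilityMeasure_integral_pi_eq {μ : Measure α} {p : α → ℝ}
    (hp0 : ∀ a, 0 ≤ p a) (hp1 : ∫ a, p a ∂μ = 1) :
    ∃ ν : Measure α, IsProbabilityMeasure ν ∧ ∀ (n : ℕ) (F : (Fin n → α) → ℝ),
      Integrable (fun x => (∏ i, p (x i)) * F x) (Measure.pi fun _ => μ) →
      Integrable F (Measure.pi fun _ => ν) ∧
        ∫ x, (∏ i, p (x i)) * F x ∂Measure.pi (fun _ => μ)
          = ∫ x, F x ∂Measure.pi (fun _ => ν) := by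
  have hp : Integrable p μ := .of_integral_ne_zero (by simp [hp1])
  obtain ⟨g, hg, hpg⟩ := hp.aefinStronglyMeasurable
  obtain ⟨t, ht, hgt, _⟩ := hg.exists_set_sigmaFinite
  set w : α → ℝ≥0 := fun a => (g a).toNNReal
  have hw : Measurable w := hg.stronglyMeasurable.measurable.real_toNNReal
  have hwp : (fun a => (w a : ℝ)) =ᵐ[μ] p := hpg.mono fun a ha => by simp [w, ← ha, hp0 a]
  have hwt : ∀ a ∉ t, w a = 0 := fun a ha => by simp [w, hgt a ha]
  refine ⟨μ.withDensity (w ·), ⟨?_⟩, fun n F hF => ?_⟩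
  · rw [withDensity_apply _ .univ, Measure.restrict_univ,
      lintegral_coe_eq_integral _ (hp.congr hwp.symm), integral_congr_ae hwp, hp1,
      ENNReal.ofReal_one]
  have hW : Measurable fun x : Fin n → α => ∏ i, w (x i) :=
    Finset.measurable_prod _ fun i _ => hw.comp (measurable_pi_apply i)
  have hprod : (fun x => (∏ i, p (x i)) * F x) =ᵐ[Measure.pi fun _ => μ]
      fun x => (∏ i, w (x i)) • F x := by
    filter_upwards [ae_all_iff.2 fun i => Measure.tendsto_eval_ae_ae' _ i hwp] with x hx
    simp [NNReal.smul_def, ← hx]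
  rw [Measure.pi_withDensity_of_restrict (fun _ => ht) (fun _ => hw) (fun _ => hwt)]
  simp_rw [← ENNReal.ofNNReal_finsetProd]
  rw [integrable_withDensity_iff_integrable_smul hW, integral_withDensity_eq_integral_smul hW,
    integral_congr_ae hprod]
  exact ⟨hF.congr hprod, rfl⟩

theorem measurePreserving_comp_succAbove (ν : Measure α) [IsProbabilityMeasure ν] {n : ℕ}
    (j : Fin (n + 1)) :
    MeasurePreserving (fun x : Fin (n + 1) → α => fun k => x (j.succAbove k))
      (Measure.pi fun _ => ν) (Measure.pi fun _ => ν) := by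
  have snd : MeasurePreserving (Prod.snd : α × (Fin n → α) → (Fin n → α))
      (ν.prod (Measure.pi fun _ => ν)) (Measure.pi fun _ => ν) :=
    ⟨measurable_snd, by rw [Measure.map_snd_prod]; simp⟩
  exact snd.comp (measurePreserving_piFinSuccAbove (fun _ => ν) j)

theorem integral_log_mean_le_succ (ν : Measure α) [IsProbabilityMeasure ν] {f : α → ℝ}
    (hf : ∀ a, 0 < f a) {n : ℕ} (hn : 0 < n)
    (hint : Integrable (fun x : Fin n → α => log ((∑ k, f (x k)) / n)) (Measure.pi fun _ => ν))
    (hint_succ : Integrable (fun x : Fin (n + 1) → α => log ((∑ k, f (x k)) / (n + 1)))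
      (Measure.pi fun _ => ν)) :
    ∫ x, log ((∑ k, f (x k)) / n) ∂Measure.pi (fun _ : Fin n => ν)
      ≤ ∫ x, log ((∑ k, f (x k)) / (n + 1)) ∂Measure.pi (fun _ : Fin (n + 1) => ν) := by
  set G : (Fin n → α) → ℝ := fun x => log ((∑ k, f (x k)) / n)
  have hG_comp : ∀ j : Fin (n + 1), Integrable (fun x => G fun k => x (j.succAbove k))
      (Measure.pi fun _ => ν) := fun j =>
    ((measurePreserving_comp_succAbove ν j).integrable_comp hint.aestronglyMeasurable).2 hint
  have hG_integral : ∀ j : Fin (n + 1), ∫ x, G (fun k => x (j.succAbove k)) ∂Measure.pi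
      (fun _ => ν) = ∫ x, G x ∂Measure.pi (fun _ => ν) := fun j => by
    have hmp := measurePreserving_comp_succAbove ν j
    rw [← integral_map hmp.measurable.aemeasurable (hmp.map_eq ▸ hint.aestronglyMeasurable),
      hmp.map_eq]
  calc ∫ x, G x ∂Measure.pi (fun _ => ν)
      = ∫ x, ∑ j : Fin (n + 1), (n + 1 : ℝ)⁻¹ * G (fun k => x (j.succAbove k))
          ∂Measure.pi (fun _ => ν) := by
        rw [integral_finsetSum _ fun j _ => (hG_comp j).const_mul _]
        simp only [integral_const_mul, hG_integral, Finset.sum_const, Finset.card_univ,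
          Fintype.card_fin, nsmul_eq_mul]
        push_cast
        field_simp
    _ ≤ _ := by
        refine integral_mono (integrable_finsetSum _ fun j _ => (hG_comp j).const_mul _)
          hint_succ fun x => ?_
        exact sum_log_mean_succAbove_le (x := fun i => f (x i)) hn fun i => hf (x i)

end MeasureTheory

theorem jensen_cross_entropy_monotone_general
    {Θ : Type*} [MeasurableSpace Θ]
    (μΘ : Measure Θ)
    (K : ℕ) (hK : 0 < K)
    (f : Θ → ℝ) (pζ : Θ → ℝ)
    (hf_pos : ∀ ζ, 0 < f ζ)
    (hpζ_pos : ∀ ζ, 0 ≤ pζ ζ) (hpζ_one : ∫ ζ, pζ ζ ∂μΘ = 1)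
    -- all expectations finite
    (hint : ∀ n : ℕ, Integrable
      (fun ζs : Fin n → Θ => (∏ k, pζ (ζs k)) * Real.log ((∑ k, f (ζs k)) / n))
      (Measure.pi fun _ : Fin n => μΘ)) :
    (∫ ζs, (∏ k, pζ (ζs k)) * Real.log ((∑ k, f (ζs k)) / K)
        ∂(Measure.pi fun _ : Fin K => μΘ))
      ≤ ∫ ζs, (∏ k, pζ (ζs k)) * Real.log ((∑ k, f (ζs k)) / (K + 1))
        ∂(Measure.pi fun _ : Fin (K + 1) => μΘ) := by
  obtain ⟨ν, _, hν⟩ := exists_isProbabilityMeasure_integral_pi_eq hpζ_pos hpζ_one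
  obtain ⟨hint_K, hK_eq⟩ := hν K _ (hint K)
  obtain ⟨hint_succ, hsucc_eq⟩ := hν (K + 1) _ (hint (K + 1))
  push_cast at hint_succ hsucc_eq
  rw [hK_eq, hsucc_eq]
  exact integral_log_mean_le_succ ν hf_pos hK hint_K hint_succ

/-- monotonicity in `K` of the Jensen-type cross-entropy bound:
for i.i.d. `ζ^k ~ p_θ(ζ)` and a positive function `ζ ↦ p_θ(z|ζ)` (here `f`),
`E_{ζ^{1..K}}[log (1/K)∑_k f(ζ^k)] ≤ E_{ζ^{1..K+1}}[log (1/(K+1))∑_k f(ζ^k)]`. -/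
theorem jensen_cross_entropy_monotone
    {Θ : Type*} [MeasurableSpace Θ]
    (μΘ : Measure Θ)
    (K : ℕ) (hK : 0 < K)
    (f : Θ → ℝ) (pζ : Θ → ℝ)
    (hf_pos : ∀ ζ, 0 < f ζ) (hf_meas : Measurable f)
    (hpζ_pos : ∀ ζ, 0 ≤ pζ ζ) (hpζ_one : ∫ ζ, pζ ζ ∂μΘ = 1)
    -- all expectations finite
    (hint : ∀ n : ℕ, Integrable
      (fun ζs : Fin n → Θ => (∏ k, pζ (ζs k)) * Real.log ((∑ k, f (ζs k)) / n))
      (Measure.pi fun _ : Fin n => μΘ)) :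
    (∫ ζs, (∏ k, pζ (ζs k)) * Real.log ((∑ k, f (ζs k)) / K)
        ∂(Measure.pi fun _ : Fin K => μΘ))
      ≤ ∫ ζs, (∏ k, pζ (ζs k)) * Real.log ((∑ k, f (ζs k)) / (K + 1))
        ∂(Measure.pi fun _ : Fin (K + 1) => μΘ) :=
  jensen_cross_entropy_monotone_general μΘ K hK f pζ hf_pos hpζ_pos hpζ_one hint
end

section
/- Convergence of the Jensen cross-entropy bound: for i.i.d. positive random variables Y_1, Y_2, ... with E[Y_1] = μ < ∞ and E[|log Y_1|] < ∞, the sequence a_K = E[log((1/K) Σ_{k=1}^K Y_k)] is nondecreasing, bounded above by log μ, and converges to log μ as K → ∞. -/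
/-!
Averaging the `K + 1` leave-one-out means of `Y 0, …, Y K` gives their full mean, so by concavity
`log` of the full mean dominates the average of `log` of the leave-one-out means. Each of these is a
mean of `K` i.i.d. samples, with expected logarithm `a K`; taking expectations gives
`a K ≤ a (K + 1)`. The strong law makes `log` of the sample mean converge almost surely to `log μ`,
and since the samples lie in `[c, C]` dominated convergence gives `a K → log μ`. A nondecreasing
sequence lies below its limit, whence `a K ≤ log μ`.
-/

open MeasureTheory ProbabilityTheory Filter Finset

section Convexity

variable {ι : Type*} {D : Set ℝ}

theorem Convex.sum_div_card_mem (hD : Convex ℝ D) {s : Finset ι} (hs : s.Nonempty) {x : ι → ℝ}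
    (hx : ∀ i ∈ s, x i ∈ D) : (∑ i ∈ s, x i) / #s ∈ D := by
  have hcard : (0 : ℝ) < #s := by exact_mod_cast hs.card_pos
  have hw : ∑ _i ∈ s, (#s : ℝ)⁻¹ = 1 := by
    rw [sum_const, nsmul_eq_mul, mul_inv_cancel₀ hcard.ne']
  rw [div_eq_inv_mul, mul_sum]
  exact hD.sum_mem (fun _ _ => by positivity) hw hx

/-- The leave-one-out means of a sample average to the mean of the whole sample, so this is
Jensen's inequality. -/
theorem ConcaveOn.sum_comp_erase_div_le [DecidableEq ι] {f : ℝ → ℝ} (hf : ConcaveOn ℝ D f)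
    {s : Finset ι} {x : ι → ℝ} (hx : ∀ i ∈ s, x i ∈ D) {K : ℕ} (hK : 0 < K) (hs : #s = K + 1) :
    (∑ j ∈ s, f ((∑ i ∈ s.erase j, x i) / K)) / (K + 1) ≤ f ((∑ i ∈ s, x i) / (K + 1)) := by
  have hK' : (0 : ℝ) < K := by exact_mod_cast hK
  have hcard_erase : ∀ j ∈ s, #(s.erase j) = K := fun j hj => by
    rw [card_erase_of_mem hj, hs, Nat.add_sub_cancel]
  have hmem : ∀ j ∈ s, (∑ i ∈ s.erase j, x i) / K ∈ D := fun j hj => by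
    have hne : (s.erase j).Nonempty := card_pos.1 (hcard_erase j hj ▸ hK)
    simpa [hcard_erase j hj] using hf.1.sum_div_card_mem hne fun i hi => hx i (mem_of_mem_erase hi)
  have hw : ∑ _j ∈ s, ((K : ℝ) + 1)⁻¹ = 1 := by
    rw [sum_const, hs, nsmul_eq_mul]; push_cast; field_simp
  have hmean : ∑ j ∈ s, ((K : ℝ) + 1)⁻¹ • ((∑ i ∈ s.erase j, x i) / K)
      = (∑ i ∈ s, x i) / (K + 1) := by
    rw [← smul_sum, ← sum_div, sum_congr rfl fun j hj => sum_erase_eq_sub hj, sum_sub_distrib,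
      sum_const, hs, nsmul_eq_mul, smul_eq_mul]
    push_cast
    field_simp
    ring
  have := hf.le_map_sum (fun _ _ => by positivity) hw hmem
  rw [hmean, ← smul_sum, smul_eq_mul, inv_mul_eq_div] at this
  exact this

end Convexity

section SampleMean

variable {Ω : Type*}

/-- `sampleMean Y 0 = 0`, since `x / 0 = 0`. -/
noncomputable def sampleMean (Y : ℕ → Ω → ℝ) (n : ℕ) (ω : Ω) : ℝ :=
  (∑ k ∈ range n, Y k ω) / n

theorem sampleMean_mem {D : Set ℝ} (hD : Convex ℝ D) {Y : ℕ → Ω → ℝ} (hY : ∀ k ω, Y k ω ∈ D)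
    {n : ℕ} (hn : 0 < n) (ω : Ω) : sampleMean Y n ω ∈ D := by
  simpa [sampleMean] using hD.sum_div_card_mem (nonempty_range_iff.2 hn.ne') fun k _ => hY k ω

end SampleMean

section IID

variable {Ω : Type*} [MeasurableSpace Ω] {P : Measure Ω}

theorem ProbabilityTheory.iIndepFun.identDistrib_sum_of_card_eq {ι E : Type*} [AddCommMonoid E]
    [MeasurableSpace E] [MeasurableAdd₂ E] {Y : ι → Ω → E} (hindep : iIndepFun Y P)
    (hident : ∀ i j, IdentDistrib (Y i) (Y j) P P) {s t : Finset ι} (hst : #s = #t) :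
    IdentDistrib (∑ i ∈ s, Y i) (∑ i ∈ t, Y i) P P := by
  let e : s ≃ t := equivOfCardEq hst
  have hvec : IdentDistrib (fun ω (i : s) => Y i ω) (fun ω (i : s) => Y (e i) ω) P P :=
    IdentDistrib.pi (fun i => hident _ _) (hindep.precomp Subtype.val_injective)
      (hindep.precomp (Subtype.val_injective.comp e.injective))
  have hsum : Measurable fun v : s → E => ∑ i, v i :=
    Finset.measurable_sum _ fun i _ => measurable_pi_apply i
  convert hvec.comp hsum using 1
  · ext ω
    rw [Finset.sum_apply, ← sum_coe_sort s]
    rfl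
  · ext ω
    rw [Finset.sum_apply, ← sum_coe_sort t]
    exact (e.sum_comp fun i : t => Y i ω).symm

theorem aemeasurable_sampleMean {Y : ℕ → Ω → ℝ} (hY : ∀ k, AEMeasurable (Y k) P) (n : ℕ) :
    AEMeasurable (sampleMean Y n) P :=
  (Finset.aemeasurable_fun_sum _ fun k _ => hY k).div_const _

theorem integrable_comp_sampleMean [IsFiniteMeasure P] {D : Set ℝ} (hDc : Convex ℝ D)
    (hDk : IsCompact D) {f : ℝ → ℝ} (hf : ContinuousOn f D) (hfm : Measurable f)
    {Y : ℕ → Ω → ℝ} (hmeas : ∀ k, AEMeasurable (Y k) P) (hY : ∀ k ω, Y k ω ∈ D) {n : ℕ}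
    (hn : 0 < n) : Integrable (fun ω => f (sampleMean Y n ω)) P := by
  obtain ⟨B, hB⟩ := hDk.exists_bound_of_continuousOn hf
  exact .of_bound (hfm.comp_aemeasurable (aemeasurable_sampleMean hmeas n)).aestronglyMeasurable B
    (ae_of_all _ fun ω => hB _ (sampleMean_mem hDc hY hn ω))

theorem integral_comp_sampleMean_le_succ {D : Set ℝ} {f : ℝ → ℝ} (hf : ConcaveOn ℝ D f)
    (hfm : Measurable f) {Y : ℕ → Ω → ℝ} (hindep : iIndepFun Y P)
    (hident : ∀ k, IdentDistrib (Y k) (Y 0) P P) (hY : ∀ k ω, Y k ω ∈ D)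
    (hint : ∀ n, 0 < n → Integrable (fun ω => f (sampleMean Y n ω)) P) {K : ℕ} (hK : 0 < K) :
    ∫ ω, f (sampleMean Y K ω) ∂P ≤ ∫ ω, f (sampleMean Y (K + 1) ω) ∂P := by
  set s := range (K + 1)
  have hloo : ∀ j ∈ s, IdentDistrib (fun ω => f ((∑ i ∈ s.erase j, Y i ω) / K))
      (fun ω => f (sampleMean Y K ω)) P P := fun j hj => by
    have hcard : #(s.erase j) = #(range K) := by simp [s, card_erase_of_mem hj]
    have hsum := hindep.identDistrib_sum_of_card_eq (fun i j => (hident i).trans (hident j).symm)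
      hcard
    convert hsum.comp (hfm.comp (measurable_id.div_const (K : ℝ))) using 1 <;>
    · ext ω
      simp [sampleMean, Finset.sum_apply]
  have hpointwise : ∀ ω, (∑ j ∈ s, f ((∑ i ∈ s.erase j, Y i ω) / K)) / (K + 1)
      ≤ f (sampleMean Y (K + 1) ω) := fun ω => by
    simpa [sampleMean] using hf.sum_comp_erase_div_le (fun i _ => hY i ω) hK (card_range _)
  have hint_loo : ∀ j ∈ s, Integrable (fun ω => f ((∑ i ∈ s.erase j, Y i ω) / K)) P :=
    fun j hj => (hloo j hj).integrable_iff.2 (hint K hK)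
  calc ∫ ω, f (sampleMean Y K ω) ∂P
      = ∫ ω, (∑ j ∈ s, f ((∑ i ∈ s.erase j, Y i ω) / K)) / (K + 1) ∂P := by
        rw [integral_div, integral_finsetSum _ hint_loo,
          sum_congr rfl fun j hj => (hloo j hj).integral_eq, sum_const, card_range, nsmul_eq_mul]
        push_cast
        field_simp
    _ ≤ ∫ ω, f (sampleMean Y (K + 1) ω) ∂P :=
        integral_mono ((integrable_finsetSum _ hint_loo).div_const _) (hint _ K.succ_pos)
          hpointwise

/-- The strong law of large numbers, pushed through `f` by dominated convergence: `f` is bounded on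
the compact set `D`. -/
theorem tendsto_integral_comp_sampleMean [IsProbabilityMeasure P] {D : Set ℝ} (hDc : Convex ℝ D)
    (hDk : IsCompact D) {f : ℝ → ℝ} (hf : ContinuousOn f D) (hfm : Measurable f)
    {Y : ℕ → Ω → ℝ} (hindep : Pairwise fun i j => IndepFun (Y i) (Y j) P)
    (hident : ∀ k, IdentDistrib (Y k) (Y 0) P P) (hY : ∀ k ω, Y k ω ∈ D) :
    Tendsto (fun n => ∫ ω, f (sampleMean Y n ω) ∂P) atTop (nhds (f (∫ ω, Y 0 ω ∂P))) := by
  obtain ⟨B, hB⟩ := hDk.exists_bound_of_continuousOn hf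
  have hint : Integrable (Y 0) P := by
    obtain ⟨R, hR⟩ := hDk.exists_bound_of_continuousOn continuousOn_id
    exact .of_bound (hident 0).aemeasurable_fst.aestronglyMeasurable R
      (ae_of_all _ fun ω => hR _ (hY 0 ω))
  have hmean_mem : ∫ ω, Y 0 ω ∂P ∈ D := hDc.integral_mem hDk.isClosed (ae_of_all _ (hY 0)) hint
  have hmem : ∀ᶠ n in atTop, ∀ ω, sampleMean Y n ω ∈ D :=
    eventually_atTop.2 ⟨1, fun n hn ω => sampleMean_mem hDc hY hn ω⟩
  have hlim : ∀ᵐ ω ∂P, Tendsto (fun n => f (sampleMean Y n ω)) atTop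
      (nhds (f (∫ ω, Y 0 ω ∂P))) := by
    filter_upwards [strong_law_ae_real Y hint hindep hident] with ω hω
    exact (hf _ hmean_mem).tendsto.comp
      (tendsto_nhdsWithin_iff.2 ⟨hω, hmem.mono fun n hn => hn ω⟩)
  have hmeas : ∀ n, AEStronglyMeasurable (fun ω => f (sampleMean Y n ω)) P := fun n =>
    (hfm.comp_aemeasurable
      (aemeasurable_sampleMean (fun k => (hident k).aemeasurable_fst) n)).aestronglyMeasurable
  simpa using tendsto_integral_filter_of_dominated_convergence (fun _ => B)
    (.of_forall hmeas) (hmem.mono fun n hn => ae_of_all _ fun ω => hB _ (hn ω))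
    (integrable_const B) hlim

end IID

/-- for i.i.d. positive random variables `Y k` with mean `μ`
(bounded away from `0` and `∞`, so that all expectations are finite and
uniform integrability holds), the sequence
`a K = E[log((1/K) ∑_{k<K} Y k)]` is nondecreasing (for `K ≥ 1`), bounded
above by `log μ`, and converges to `log μ`. -/
theorem jensen_cross_entropy_converges
    {Ω : Type*} [MeasurableSpace Ω] (P : Measure Ω) [IsProbabilityMeasure P]
    (Y : ℕ → Ω → ℝ) (μ : ℝ) (c C : ℝ)
    (hmeas : ∀ k, Measurable (Y k))
    (hindep : iIndepFun Y P)
    (hident : ∀ k, Measure.map (Y k) P = Measure.map (Y 0) P)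
    (hc : 0 < c) (hbdd : ∀ k ω, Y k ω ∈ Set.Icc c C)
    (hμ : μ = ∫ ω, Y 0 ω ∂P)
    (a : ℕ → ℝ)
    (ha : ∀ K, a K = ∫ ω, Real.log ((∑ k ∈ Finset.range K, Y k ω) / K) ∂P) :
    (∀ K, 1 ≤ K → a K ≤ a (K + 1))
    ∧ (∀ K, 1 ≤ K → a K ≤ Real.log μ)
    ∧ Tendsto a atTop (nhds (Real.log μ)) := by
  have ha' : a = fun K => ∫ ω, Real.log (sampleMean Y K ω) ∂P := funext ha
  have hident' : ∀ k, IdentDistrib (Y k) (Y 0) P P :=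
    fun k => ⟨(hmeas k).aemeasurable, (hmeas 0).aemeasurable, hident k⟩
  have hpos : Set.Icc c C ⊆ Set.Ioi 0 := fun x hx => hc.trans_le hx.1
  have hlog_cont : ContinuousOn Real.log (Set.Icc c C) :=
    Real.continuousOn_log.mono fun x hx => (hpos hx).ne'
  have hlog_conc : ConcaveOn ℝ (Set.Icc c C) Real.log :=
    strictConcaveOn_log_Ioi.concaveOn.subset hpos (convex_Icc c C)
  have hmono : ∀ K, 1 ≤ K → a K ≤ a (K + 1) := fun K hK => ha' ▸
    integral_comp_sampleMean_le_succ hlog_conc Real.measurable_log hindep hident' hbdd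
      (fun n hn => integrable_comp_sampleMean (convex_Icc c C) isCompact_Icc hlog_cont
        Real.measurable_log (fun k => (hmeas k).aemeasurable) hbdd hn) hK
  have hlim : Tendsto a atTop (nhds (Real.log μ)) := ha' ▸ hμ ▸
    tendsto_integral_comp_sampleMean (convex_Icc c C) isCompact_Icc hlog_cont Real.measurable_log
      (fun i j hij => hindep.indepFun hij) hident' hbdd
  refine ⟨hmono, fun K hK => ?_, hlim⟩
  obtain ⟨n, rfl⟩ : ∃ n, K = n + 1 := ⟨K - 1, by omega⟩
  exact (monotone_nat_of_le_succ fun n => hmono (n + 1) n.succ_pos).ge_of_tendsto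
    ((tendsto_add_atTop_iff_nat 1).2 hlim) n
end

section
/- DSIVI upper bound on the ELBO: for any measurable function g with E_{p_θ}[e^g] < ∞, the quantity L̄ = E_{q_φ(z)}[log p(x|z)] − 1 − E_{q_φ(z)}[g(z)] + E_{p_θ(z)}[e^{g(z)}] satisfies L̄ ≥ L, where L = E_{q_φ(z)}[log p(x|z)] − KL(q_φ ∥ p_θ) is the evidence lower bound. -/
open MeasureTheory

lemma gibbs_pointwise (a c : ℝ) (ha : 0 ≤ a) (hc : 0 ≤ c) (h : c = 0 → a = 0) :
    a - c ≤ a * Real.log (a / c) := by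
  rcases eq_or_lt_of_le ha with ha0 | ha0
  · simp [← ha0]; linarith
  · have hc0 : 0 < c := by
      rcases eq_or_lt_of_le hc with hc0 | hc0
      · exact absurd (h hc0.symm) (ne_of_gt ha0)
      · exact hc0
    have hx : Real.log (c / a) ≤ c / a - 1 :=
      Real.log_le_sub_one_of_pos (div_pos hc0 ha0)
    have hlog : Real.log (a / c) = - Real.log (c / a) := by
      rw [← Real.log_inv, inv_div]
    nlinarith [mul_le_mul_of_nonneg_left hx ha,
      mul_div_cancel₀ c (ne_of_gt ha0)]

/-- DSIVI upper bound on the ELBO: for any measurable `g` with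
`E_{p_θ}[e^g] < ∞`, `L̄ = E_q[log p(x|z)] − 1 − E_q[g] + E_{p_θ}[e^g]` is an
upper bound on the ELBO `L = E_q[log p(x|z)] − KL(q ∥ p_θ)`. -/
theorem dsivi_upper_bound
    {Z : Type*} [MeasurableSpace Z] (μ : Measure Z)
    (q pθ g lik : Z → ℝ)
    (hq_nonneg : ∀ z, 0 ≤ q z) (hp_nonneg : ∀ z, 0 ≤ pθ z)
    (hq_one : ∫ z, q z ∂μ = 1) (hp_one : ∫ z, pθ z ∂μ = 1)
    (hq_meas : Measurable q) (hp_meas : Measurable pθ) (hg_meas : Measurable g)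
    (hac : ∀ z, pθ z = 0 → q z = 0)
    (hlik_int : Integrable (fun z => q z * Real.log (lik z)) μ)
    (hkl_int : Integrable (fun z => q z * Real.log (q z / pθ z)) μ)
    (hg_int : Integrable (fun z => q z * g z) μ)
    (hexp_int : Integrable (fun z => pθ z * Real.exp (g z)) μ)
    (L Lbar : ℝ)
    (hL : L = (∫ z, q z * Real.log (lik z) ∂μ)
        - ∫ z, q z * Real.log (q z / pθ z) ∂μ)
    (hLbar : Lbar = (∫ z, q z * Real.log (lik z) ∂μ) - 1
        - (∫ z, q z * g z ∂μ) + ∫ z, pθ z * Real.exp (g z) ∂μ) :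
    L ≤ Lbar := by
  have hq_int : Integrable q μ := by
    by_contra h
    rw [integral_undef h] at hq_one
    norm_num at hq_one
  have hpt : ∀ z, q z * g z + q z - pθ z * Real.exp (g z)
      ≤ q z * Real.log (q z / pθ z) := by
    intro z
    rcases eq_or_lt_of_le (hq_nonneg z) with hqz | hqz
    · have : (0:ℝ) ≤ pθ z * Real.exp (g z) :=
        mul_nonneg (hp_nonneg z) (Real.exp_pos _).le
      simp [← hqz]; linarith
    · have hpz : 0 < pθ z := by
        rcases eq_or_lt_of_le (hp_nonneg z) with hpz | hpz
        · exact absurd (hac z hpz.symm) (ne_of_gt hqz)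
        · exact hpz
      have key := gibbs_pointwise (q z) (pθ z * Real.exp (g z)) (hq_nonneg z)
        (mul_nonneg (hp_nonneg z) (Real.exp_pos _).le)
        (fun h => absurd h (by positivity))
      have hlog : Real.log (q z / (pθ z * Real.exp (g z)))
          = Real.log (q z / pθ z) - g z := by
        rw [Real.log_div (ne_of_gt hqz) (by positivity),
          Real.log_mul (ne_of_gt hpz) (Real.exp_ne_zero _), Real.log_exp,
          Real.log_div (ne_of_gt hqz) (ne_of_gt hpz)]
        ring
      rw [hlog] at key
      nlinarith
  have hint : Integrable (fun z => q z * g z + q z - pθ z * Real.exp (g z)) μ :=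
    (hg_int.add hq_int).sub hexp_int
  have hmono := integral_mono hint hkl_int hpt
  have h1 : ∫ z, (q z * g z + q z - pθ z * Real.exp (g z)) ∂μ
      = (∫ z, (q z * g z + q z) ∂μ) - ∫ z, pθ z * Real.exp (g z) ∂μ :=
    integral_sub (hg_int.add hq_int) hexp_int
  have h2 : ∫ z, (q z * g z + q z) ∂μ
      = (∫ z, q z * g z ∂μ) + ∫ z, q z ∂μ :=
    integral_add hg_int hq_int
  rw [h1, h2, hq_one] at hmono
  linarith [hmono]
end
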